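/- Let γ ∈ (0,1/2) and r ∈ ℕ, and let R, P be disjoint dyadic cubes with R r-good. If d(R,P) > max(ℓR, ℓP)^{1−γ} · min(ℓR, ℓP)^γ, then there exists a dyadic cube K containing both P and R such that ℓ(K) · (min(ℓP, ℓR)/ℓ(K))^γ ≤ 2^r d(R,P). -/

import Mathlib

open MeasureTheory ENNReal Set

structure DyadicCube (d : ℕ) where
  j : ℤ
  m : Fin d → ℤ

namespace DyadicCube

variable {d : ℕ}

/-- side length `2^{-j}` of the dyadic cube. -/
noncomputable def side (Q : DyadicCube d) : ℝ := 2 ^ (-Q.j)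

/-- the dyadic cube `2^{-j}([0,1)^d + m)` as a subset of `ℝ^d`. -/
def toSet (Q : DyadicCube d) : Set (Fin d → ℝ) :=
  {x | ∀ i, (Q.m i : ℝ) * 2 ^ (-Q.j) ≤ x i ∧ x i < ((Q.m i : ℝ) + 1) * 2 ^ (-Q.j)}

/-- the concentric triple `3Q`. -/
def triple (Q : DyadicCube d) : Set (Fin d → ℝ) :=
  {x | ∀ i, ((Q.m i : ℝ) - 1) * 2 ^ (-Q.j) ≤ x i ∧ x i < ((Q.m i : ℝ) + 2) * 2 ^ (-Q.j)}

/-- the centre of the cube. -/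
noncomputable def center (Q : DyadicCube d) : Fin d → ℝ :=
  fun i => ((Q.m i : ℝ) + 1 / 2) * 2 ^ (-Q.j)

/-- the `k`-fold dyadic ancestor `Q^{(k)}`. -/
def ancestor (k : ℕ) (Q : DyadicCube d) : DyadicCube d :=
  ⟨Q.j - k, fun i => Int.fdiv (Q.m i) (2 ^ k)⟩

/-- the `k`-grandchildren `ch_k(Q)`. -/
def children (k : ℕ) (Q : DyadicCube d) : Set (DyadicCube d) :=
  {P | P.j = Q.j + k ∧ P.toSet ⊆ Q.toSet}

/-- distance between two sets in the `ℓ^∞` metric of `ℝ^d`. -/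
noncomputable def sdist (A B : Set (Fin d → ℝ)) : ℝ :=
  (⨅ a ∈ A, EMetric.infEdist a B).toReal

/-- average `⟨f⟩_A` of `f` over `A`. -/
noncomputable def avg (f : (Fin d → ℝ) → ℝ) (A : Set (Fin d → ℝ)) : ℝ :=
  (volume A).toReal⁻¹ * ∫ x in A, f x

/-- average `⟨|f|⟩_A`. -/
noncomputable def avgAbs (f : (Fin d → ℝ) → ℝ) (A : Set (Fin d → ℝ)) : ℝ :=
  avg (fun x => |f x|) A

/-- `Q` is `r`-good with parameter `γ`. -/
def IsGood (r : ℕ) (γ : ℝ) (Q : DyadicCube d) : Prop :=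
  ∀ P : DyadicCube d, 2 ^ r * Q.side ≤ P.side →
    Q.side ^ γ * P.side ^ (1 - γ) < sdist Q.toSet (frontier P.toSet)

/-- martingale (Haar) difference `Δ_Q f`. -/
noncomputable def mdiff (f : (Fin d → ℝ) → ℝ) (Q : DyadicCube d) (x : Fin d → ℝ) : ℝ :=
  ∑' J : {J : DyadicCube d // J ∈ children 1 Q},
    Set.indicator J.1.toSet (fun _ => avg f J.1.toSet - avg f Q.toSet) x

/-- `Σ_ε ⟨f, h_Q^ε⟩² = ‖Δ_Q f‖_{L²}²`, the total squared Haar coefficient on `Q`. -/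
noncomputable def haarSq (f : (Fin d → ℝ) → ℝ) (P : DyadicCube d) : ℝ :=
  ∫ x in P.toSet, (mdiff f P x) ^ 2

end DyadicCube

open DyadicCube

/-!
Let `K` be the smallest dyadic ancestor of `R` containing `P`, and `S` its child containing `R`;
by dyadic nesting `S` is disjoint from `P`. With `m = min(ℓP, ℓR)`, `ℓK (m / ℓK)^γ = ℓK^{1-γ} m^γ`.
If `ℓK ≤ 2^r ℓR` the bound follows directly from the separation assumption on `d(R,P)`.
Otherwise `ℓS ≥ 2^r ℓR`, so goodness of `R` gives `ℓR^γ ℓS^{1-γ} < d(R, ∂S) ≤ d(R,P)`, and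
`ℓK = 2 ℓS` costs a factor `2 ≤ 2^r`: a cube is never `0`-good, since `d(R, ∂R) = 0`.
-/

open Metric

theorem infEDist_frontier_le_edist {E : Type*} [NormedAddCommGroup E] [NormedSpace ℝ E]
    [FiniteDimensional ℝ E] {s : Set E} {x p : E} (hx : x ∈ s) (hp : p ∉ s) :
    infEDist x (frontier s) ≤ edist x p := by
  obtain ⟨y, hy, hxy⟩ :=
    exists_mem_frontier_infDist_compl_eq_dist hx ((ne_univ_iff_exists_notMem s).2 ⟨p, hp⟩)
  calc infEDist x (frontier s) ≤ edist x y := infEDist_le_edist_of_mem hy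
    _ ≤ edist x p := by
      rw [edist_dist, edist_dist, ← hxy]
      exact ENNReal.ofReal_le_ofReal (infDist_le_dist_of_mem hp)

theorem mul_div_rpow_eq_rpow_one_sub_mul_rpow {a b : ℝ} (γ : ℝ) (ha : 0 < a) (hb : 0 ≤ b) :
    a * (b / a) ^ γ = a ^ (1 - γ) * b ^ γ := by
  rw [Real.div_rpow hb ha.le, Real.rpow_sub ha, Real.rpow_one]
  ring

theorem rpow_one_sub_mul_rpow_le {γ a b c m : ℝ} (hγ : γ ∈ Icc (0 : ℝ) 1) (ha : 0 ≤ a)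
    (hc : 1 ≤ c) (hab : a ≤ c * b) (hm : 0 ≤ m) :
    a ^ (1 - γ) * m ^ γ ≤ c * (b ^ (1 - γ) * m ^ γ) := by
  have hb : 0 ≤ b := nonneg_of_mul_nonneg_right (ha.trans hab) (by linarith)
  obtain ⟨hγ0, hγ1⟩ := hγ
  calc a ^ (1 - γ) * m ^ γ ≤ (c * b) ^ (1 - γ) * m ^ γ := by gcongr
    _ = c ^ (1 - γ) * (b ^ (1 - γ) * m ^ γ) := by
      rw [Real.mul_rpow (by linarith) hb]; ring
    _ ≤ c * (b ^ (1 - γ) * m ^ γ) := by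
      gcongr; exact Real.rpow_le_self_of_one_le hc (by linarith)

namespace DyadicCube

variable {d : ℕ}

theorem side_pos (Q : DyadicCube d) : 0 < Q.side := zpow_pos two_pos _

theorem side_ancestor (k : ℕ) (Q : DyadicCube d) : (ancestor k Q).side = 2 ^ k * Q.side := by
  rw [side, side, ancestor, neg_sub, sub_eq_add_neg, zpow_add₀ two_ne_zero, zpow_natCast]

theorem ancestor_zero (Q : DyadicCube d) : ancestor 0 Q = Q := by
  simp [ancestor]

theorem mem_toSet_iff {Q : DyadicCube d} {x : Fin d → ℝ} :
    x ∈ Q.toSet ↔ ∀ i, ⌊x i * 2 ^ Q.j⌋ = Q.m i := by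
  have h := zpow_pos (two_pos : (0 : ℝ) < 2) Q.j
  simp only [toSet, mem_ofPred_eq, Int.floor_eq_iff, zpow_neg, ← div_eq_mul_inv, div_le_iff₀ h,
    lt_div_iff₀ h]

theorem toSet_nonempty (Q : DyadicCube d) : Q.toSet.Nonempty :=
  ⟨fun i => Q.m i * 2 ^ (-Q.j), mem_toSet_iff.2 fun i => by
    rw [zpow_neg, mul_assoc, inv_mul_cancel₀ (zpow_ne_zero _ two_ne_zero), mul_one, Int.floor_intCast]⟩

theorem floor_mul_zpow_sub (t : ℝ) (j : ℤ) (k : ℕ) :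
    ⌊t * 2 ^ (j - k)⌋ = Int.fdiv ⌊t * 2 ^ j⌋ (2 ^ k) := by
  rw [Int.fdiv_eq_ediv_of_nonneg _ (by positivity), zpow_sub₀ two_ne_zero, zpow_natCast,
    ← mul_div_assoc, show (2 : ℝ) ^ k = ((2 ^ k : ℕ) : ℝ) by push_cast; rfl, Int.floor_div_natCast]
  push_cast
  rfl

theorem subset_ancestor (k : ℕ) (Q : DyadicCube d) : Q.toSet ⊆ (ancestor k Q).toSet := by
  intro x hx
  rw [mem_toSet_iff] at hx ⊢
  intro i
  simp only [ancestor, floor_mul_zpow_sub, hx i]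

theorem toSet_subset_of_j_le {A B : DyadicCube d} {x : Fin d → ℝ} (hj : B.j ≤ A.j)
    (hxA : x ∈ A.toSet) (hxB : x ∈ B.toSet) : A.toSet ⊆ B.toSet := by
  obtain ⟨k, hk⟩ : ∃ k : ℕ, B.j = A.j - k := ⟨(A.j - B.j).toNat, by omega⟩
  intro y hy
  rw [mem_toSet_iff] at hxA hxB hy ⊢
  intro i
  rw [← hxB i, hk, floor_mul_zpow_sub, floor_mul_zpow_sub, hxA i, hy i]

theorem toSet_subset_ancestor_of_subset {R K : DyadicCube d} (h : R.toSet ⊆ K.toSet) :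
    K.toSet ⊆ (ancestor (R.j - K.j).toNat R).toSet := by
  obtain ⟨x, hx⟩ := toSet_nonempty R
  exact toSet_subset_of_j_le (by simp only [ancestor]; omega) (h hx) (subset_ancestor _ R hx)

theorem exists_ancestor_subset_disjoint {R P : DyadicCube d} (hdisj : Disjoint R.toSet P.toSet)
    (hanc : ∃ K : DyadicCube d, P.toSet ⊆ K.toSet ∧ R.toSet ⊆ K.toSet) :
    ∃ n, P.toSet ⊆ (ancestor (n + 1) R).toSet ∧ Disjoint (ancestor n R).toSet P.toSet := by
  classical
  have hex : ∃ n, P.toSet ⊆ (ancestor n R).toSet := by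
    obtain ⟨K, hPK, hRK⟩ := hanc
    exact ⟨_, hPK.trans (toSet_subset_ancestor_of_subset hRK)⟩
  obtain ⟨n, hn⟩ : ∃ n, Nat.find hex = n + 1 := by
    refine Nat.exists_eq_succ_of_ne_zero fun h => ?_
    obtain ⟨p, hp⟩ := toSet_nonempty P
    have hPR := Nat.find_spec hex
    rw [h, ancestor_zero] at hPR
    exact hdisj.notMem_of_mem_right hp (hPR hp)
  refine ⟨n, hn ▸ Nat.find_spec hex, Set.disjoint_left.2 fun x hxS hxP => ?_⟩
  rcases le_total (ancestor n R).j P.j with h | h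
  · exact Nat.find_min hex (by omega) (toSet_subset_of_j_le h hxP hxS)
  · obtain ⟨y, hy⟩ := toSet_nonempty R
    exact hdisj.notMem_of_mem_left hy (toSet_subset_of_j_le h hxS hxP (subset_ancestor n R hy))

theorem sdist_le_sdist_frontier {A B S : Set (Fin d → ℝ)} (hA : A.Nonempty) (hB : B.Nonempty)
    (hAS : A ⊆ S) (hSB : Disjoint S B) : sdist A (frontier S) ≤ sdist A B := by
  obtain ⟨a, ha⟩ := hA
  refine ENNReal.toReal_mono (ne_top_of_le_ne_top (infEDist_ne_top hB) (iInf₂_le a ha)) ?_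
  refine iInf₂_mono fun x hx => le_infEDist.2 fun p hp => ?_
  exact infEDist_frontier_le_edist (hAS hx) (hSB.notMem_of_mem_right hp)

theorem sdist_eq_zero_of_mem_closure {A B : Set (Fin d → ℝ)} {x : Fin d → ℝ}
    (hxA : x ∈ closure A) (hxB : x ∈ B) : sdist A B = 0 := by
  have h : (⨅ a ∈ A, infEDist a B) ≤ infEDist x A :=
    iInf₂_mono fun a _ => (infEDist_le_edist_of_mem hxB).trans_eq (edist_comm a x)
  rw [mem_closure_iff_infEDist_zero.1 hxA, nonpos_iff_eq_zero] at h
  exact (congrArg ENNReal.toReal h).trans ENNReal.toReal_zero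

theorem IsGood.rpow_mul_lt_sdist {r : ℕ} {γ : ℝ} {R S : DyadicCube d} {B : Set (Fin d → ℝ)}
    (hR : IsGood r γ R) (hRS : R.toSet ⊆ S.toSet) (hS : 2 ^ r * R.side ≤ S.side)
    (hSB : Disjoint S.toSet B) (hB : B.Nonempty) :
    R.side ^ γ * S.side ^ (1 - γ) < sdist R.toSet B :=
  (hR S hS).trans_le (sdist_le_sdist_frontier (toSet_nonempty R) hB hRS hSB)

theorem IsGood.toSet_eq_univ_of_zero {γ : ℝ} {Q : DyadicCube d} (hQ : IsGood 0 γ Q) :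
    Q.toSet = univ := by
  by_contra hne
  obtain ⟨x, hx⟩ := nonempty_frontier_iff.2 ⟨toSet_nonempty Q, hne⟩
  have h := hQ Q (by rw [pow_zero, one_mul])
  rw [sdist_eq_zero_of_mem_closure (frontier_subset_closure hx) hx, ← Real.rpow_add (side_pos Q),
    add_sub_cancel, Real.rpow_one] at h
  exact h.not_gt (side_pos Q)

end DyadicCube

/-- Common ancestor lemma: if `R, P` are disjoint dyadic cubes, `R` is `r`-good, the grid has the
common-ancestor property for `P` and `R`, and `d(R,P) > max(ℓR,ℓP)^{1-γ} min(ℓR,ℓP)^γ`, then there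
is a dyadic cube `K ⊇ P ∪ R` with `ℓK (min(ℓP,ℓR)/ℓK)^γ ≤ 2^r d(R,P)`. -/
theorem common_ancestor {d : ℕ} (r : ℕ) {γ : ℝ} (hγ : γ ∈ Set.Ioo (0 : ℝ) (1 / 2))
    (R P : DyadicCube d) (hdisj : Disjoint R.toSet P.toSet) (hgood : IsGood r γ R)
    (hanc : ∃ K : DyadicCube d, P.toSet ⊆ K.toSet ∧ R.toSet ⊆ K.toSet)
    (hd : (max R.side P.side) ^ (1 - γ) * (min R.side P.side) ^ γ < sdist R.toSet P.toSet) :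
    ∃ K : DyadicCube d, P.toSet ⊆ K.toSet ∧ R.toSet ⊆ K.toSet ∧
      K.side * (min P.side R.side / K.side) ^ γ ≤ 2 ^ r * sdist R.toSet P.toSet := by
  have hγ' : γ ∈ Icc (0 : ℝ) 1 := ⟨hγ.1.le, by linarith [hγ.2]⟩
  obtain ⟨n, hPK, hSP⟩ := exists_ancestor_subset_disjoint hdisj hanc
  refine ⟨ancestor (n + 1) R, hPK, subset_ancestor _ R, ?_⟩
  have hR : 0 ≤ R.side := (side_pos R).le
  have hmin : 0 ≤ min P.side R.side := le_min (side_pos P).le hR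
  rw [mul_div_rpow_eq_rpow_one_sub_mul_rpow γ (side_pos _) hmin, side_ancestor]
  rcases le_or_gt (n + 1) r with hnr | hrn
  · calc (2 ^ (n + 1) * R.side) ^ (1 - γ) * min P.side R.side ^ γ
        ≤ 2 ^ r * (max R.side P.side ^ (1 - γ) * min P.side R.side ^ γ) := by
          refine rpow_one_sub_mul_rpow_le hγ' (by positivity) (one_le_pow₀ one_le_two) ?_ hmin
          gcongr
          exacts [one_le_two, le_max_left _ _]
      _ = 2 ^ r * (max R.side P.side ^ (1 - γ) * min R.side P.side ^ γ) := by rw [min_comm]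
      _ ≤ 2 ^ r * sdist R.toSet P.toSet := by gcongr
  · have hr : r ≠ 0 := by
      rintro rfl
      obtain ⟨p, hp⟩ := toSet_nonempty P
      exact hdisj.notMem_of_mem_right hp (hgood.toSet_eq_univ_of_zero ▸ mem_univ p)
    have hS : 2 ^ r * R.side ≤ (ancestor n R).side := by
      rw [side_ancestor]
      gcongr
      exacts [one_le_two, Nat.le_of_lt_succ hrn]
    calc (2 ^ (n + 1) * R.side) ^ (1 - γ) * min P.side R.side ^ γ
        ≤ 2 * ((ancestor n R).side ^ (1 - γ) * min P.side R.side ^ γ) := by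
          refine rpow_one_sub_mul_rpow_le hγ' (by positivity) one_le_two ?_ hmin
          rw [side_ancestor, pow_succ, mul_comm _ (2 : ℝ), mul_assoc]
      _ ≤ 2 * (R.side ^ γ * (ancestor n R).side ^ (1 - γ)) := by
          rw [mul_comm (R.side ^ γ)]
          gcongr
          exacts [Real.rpow_nonneg (side_pos _).le _, hγ.1.le, min_le_right _ _]
      _ ≤ 2 * sdist R.toSet P.toSet := by
          gcongr
          exact (hgood.rpow_mul_lt_sdist (subset_ancestor n R) hS hSP (toSet_nonempty P)).le
      _ ≤ 2 ^ r * sdist R.toSet P.toSet := by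
          gcongr
          · exact ENNReal.toReal_nonneg
          · exact le_self_pow₀ one_le_two hr
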